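/- Let f : ℝ^d → ℝ be μ-strongly convex (μ > 0), let g = (g_1, …, g_q) : ℝ^d → ℝ^q have each component convex with all subgradients of each g_l bounded in norm by L_g, let A ∈ ℝ^{p×d}, b, v ∈ ℝ^p and z ∈ ℝ^q. For ζ = (u, y) ∈ ℝ^p × ℝ^q_{≥0}, the function x ↦ f(x) + ⟨u, A x − b − v⟩ + ⟨y, g(x) − z⟩ has a unique minimizer x(ζ), and the dual function φ(ζ) = min_x [f(x) + ⟨u, A x − b − v⟩ + ⟨y, g(x) − z⟩] is concave on ℝ^p × ℝ^q_{≥0}; moreover the map ζ ↦ (A x(ζ) − b − v, g(x(ζ)) − z) is a supergradient selection for φ (i.e., φ(ζ') ≤ φ(ζ) + ⟨(A x(ζ) − b − v, g(x(ζ)) − z), ζ' − ζ⟩ for all ζ' ∈ ℝ^p × ℝ^q_{≥0}), and there exists a constant L > 0, depending only on ‖A‖, q, L_g and μ, such that this map is L-Lipschitz on ℝ^p × ℝ^q_{≥0}. -/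

import Mathlib

/-!
For `ζ = (u, y)` with `y ≥ 0` the Lagrangian is `f` plus an affine function plus a nonnegative
combination of the convex `g_l`, hence `μ`-strongly convex: it has a unique minimizer `x(ζ)`, and
it grows at least like `μ/2 ‖w - x(ζ)‖²` away from it. The dual function is a pointwise minimum of
functions affine in `ζ`, hence concave, and at fixed `x` the Lagrangian changes in `ζ` exactly by
the pairing with the residual `(A x - b - v, g x - z)`, which is the supergradient inequality.
Adding the quadratic-growth inequalities at `x(ζ)` and `x(ζ')` gives
`μ ‖x(ζ) - x(ζ')‖² ≤ ⟪ζ - ζ', residual(x(ζ')) - residual(x(ζ))⟫`. Bounded subgradients make each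
`g_l` `Lg`-Lipschitz, so the residual is `√(‖A‖² + q Lg²)`-Lipschitz in `x`, and Cauchy–Schwarz
gives the Lipschitz constant `(‖A‖² + q Lg²) / μ` in `ζ`. Subgradients, used both for the
coercivity of `f` and for the Lipschitz bound on `g_l`, exist by separating a point of the graph
from the open strict epigraph.
-/

open RealInnerProductSpace Finset

/-- A vector `s` is a subgradient of `g` at `x` if `g y ≥ g x + ⟪s, y - x⟫` for all `y`. -/
def IsSubgradientAt {E : Type*} [NormedAddCommGroup E] [InnerProductSpace ℝ E]
    (g : E → ℝ) (s : E) (x : E) : Prop :=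
  ∀ y, g y ≥ g x + ⟪s, y - x⟫

/-- The Lagrangian `x ↦ f x + ⟪u, A x − b − v⟫ + ⟪y, g x − z⟫` at `ζ = (u, y)`. -/
noncomputable def lagrangian {d p q : ℕ}
    (f : EuclideanSpace ℝ (Fin d) → ℝ)
    (g : EuclideanSpace ℝ (Fin d) → EuclideanSpace ℝ (Fin q))
    (A : EuclideanSpace ℝ (Fin d) →L[ℝ] EuclideanSpace ℝ (Fin p))
    (b v : EuclideanSpace ℝ (Fin p)) (z : EuclideanSpace ℝ (Fin q))
    (ζ : EuclideanSpace ℝ (Fin p) × EuclideanSpace ℝ (Fin q))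
    (x : EuclideanSpace ℝ (Fin d)) : ℝ :=
  f x + ⟪ζ.1, A x - b - v⟫ + ⟪ζ.2, g x - z⟫

open Filter Set Topology

section Subgradient

variable {E : Type*} [NormedAddCommGroup E] [InnerProductSpace ℝ E] {h : E → ℝ}

theorem ConvexOn.exists_isSubgradientAt [FiniteDimensional ℝ E] (hh : ConvexOn ℝ univ h)
    (x : E) : ∃ s, IsSubgradientAt h s x := by
  have hcont : Continuous h := continuousOn_univ.1 (hh.continuousOn isOpen_univ)
  obtain ⟨F, hF⟩ := geometric_hahn_banach_open_point (x := (x, h x))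
    (by simpa using hh.convex_strict_epigraph)
    (isOpen_lt (hcont.comp continuous_fst) continuous_snd) (lt_irrefl (h x))
  set φ : StrongDual ℝ E := F.comp (.inl ℝ E ℝ)
  set c := F (0, 1)
  have hF_apply (w : E) (r : ℝ) : F (w, r) = φ w + r * c := by
    rw [show (w, r) = (w, 0) + r • ((0 : E), (1 : ℝ)) by simp, map_add, map_smul, smul_eq_mul]
    rfl
  have hc : c < 0 := by
    have := hF (x, h x + 1) (by simp)
    simp only [hF_apply] at this
    linarith
  -- `(w, h w)` lies in the closure of the strict epigraph
  have hsupp (w : E) : φ w + h w * c ≤ φ x + h x * c := by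
    refine le_of_tendsto (f := fun r => φ w + r * c) (x := 𝓝[>] (h w)) ?_ ?_
    · exact ((continuous_const.add (continuous_id.mul continuous_const)).tendsto _).mono_left
        nhdsWithin_le_nhds
    · filter_upwards [self_mem_nhdsWithin] with r hr
      simpa [hF_apply] using (hF (w, r) hr).le
  refine ⟨(-c)⁻¹ • (InnerProductSpace.toDual ℝ E).symm φ, fun w => ?_⟩
  rw [real_inner_smul_left, inner_sub_right, InnerProductSpace.toDual_symm_apply,
    InnerProductSpace.toDual_symm_apply, ge_iff_le, ← le_sub_iff_add_le',
    inv_mul_le_iff₀ (by linarith)]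
  linarith [hsupp w]

theorem ConvexOn.abs_sub_le_of_norm_subgradient_le [FiniteDimensional ℝ E]
    (hh : ConvexOn ℝ univ h) {L : ℝ} (hL : ∀ x s, IsSubgradientAt h s x → ‖s‖ ≤ L) (x y : E) :
    |h x - h y| ≤ L * ‖x - y‖ := by
  have key (x y : E) : h x - h y ≤ L * ‖x - y‖ := by
    obtain ⟨s, hs⟩ := hh.exists_isSubgradientAt x
    have hsy := hs y
    rw [← neg_sub x y, inner_neg_right] at hsy
    calc h x - h y ≤ ⟪s, x - y⟫ := by linarith
      _ ≤ ‖s‖ * ‖x - y‖ := real_inner_le_norm _ _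
      _ ≤ L * ‖x - y‖ := by gcongr; exact hL x s hs
  exact abs_sub_le_iff.2 ⟨key x y, norm_sub_rev x y ▸ key y x⟩

end Subgradient

section StrongConvexity

variable {E : Type*} [NormedAddCommGroup E] {m : ℝ} {f : E → ℝ}

theorem StrongConvexOn.add_convexOn [NormedSpace ℝ E] {s : Set E} {h : E → ℝ}
    (hf : StrongConvexOn s m f) (hh : ConvexOn ℝ s h) : StrongConvexOn s m (f + h) := by
  have := hf.add hh.uniformConvexOn_zero
  simp only [add_zero] at this
  exact this

theorem StrongConvexOn.add_sq_norm_sub_le [NormedSpace ℝ E] (hf : StrongConvexOn univ m f)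
    {x : E} (hx : ∀ w, f x ≤ f w) (w : E) : f x + m / 2 * ‖w - x‖ ^ 2 ≤ f w := by
  have hgrowth : ∀ a ∈ Ioo (0 : ℝ) 1, f x + (1 - a) * (m / 2 * ‖w - x‖ ^ 2) ≤ f w := by
    rintro a ⟨ha₀, ha₁⟩
    have hconv := hf.2 (mem_univ w) (mem_univ x) ha₀.le (sub_nonneg.2 ha₁.le) (add_sub_cancel a 1)
    have hmin := hx (a • w + (1 - a) • x)
    simp only [smul_eq_mul] at hconv
    nlinarith
  refine le_of_tendsto (f := fun a => f x + (1 - a) * (m / 2 * ‖w - x‖ ^ 2)) (x := 𝓝[>] 0) ?_ ?_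
  · exact tendsto_nhdsWithin_of_tendsto_nhds (Continuous.tendsto' (by fun_prop) _ _ (by simp))
  filter_upwards [Ioo_mem_nhdsGT one_pos] using hgrowth

variable [InnerProductSpace ℝ E] [FiniteDimensional ℝ E]

theorem StrongConvexOn.exists_forall_le (hf : StrongConvexOn univ m f) (hm : 0 < m) :
    ∃ x, ∀ w, f x ≤ f w := by
  rw [strongConvexOn_iff_convex] at hf
  obtain ⟨s, hs⟩ := hf.exists_isSubgradientAt 0
  have hcont : Continuous f :=
    ((continuousOn_univ.1 (hf.continuousOn isOpen_univ)).add
      (continuous_const.mul (continuous_norm.pow 2))).congr fun x => sub_add_cancel _ _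
  -- the affine minorant `f 0 + ⟪s, w⟫` of the convex part makes `f` grow quadratically
  refine hcont.exists_forall_le' 0 ?_
  filter_upwards [tendsto_norm_cocompact_atTop.eventually (eventually_ge_atTop (2 * ‖s‖ / m))]
    with w hw
  have hsw := hs w
  simp only [sub_zero, norm_zero] at hsw
  have hinner := (abs_le.1 (abs_real_inner_le_norm s w)).1
  have hlarge : ‖s‖ ≤ m / 2 * ‖w‖ := by
    rw [div_le_iff₀ hm] at hw
    linarith
  nlinarith [norm_nonneg w]

end StrongConvexity

theorem mul_add_mul_le_sqrt_mul_sqrt (a b c d : ℝ) :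
    a * b + c * d ≤ √(a ^ 2 + c ^ 2) * √(b ^ 2 + d ^ 2) := by
  rw [← Real.sqrt_mul (by positivity)]
  exact Real.le_sqrt_of_sq_le (by nlinarith [sq_nonneg (a * d - b * c)])

theorem le_div_mul_of_sq_le_of_mul_sq_le {R r δ C μ : ℝ} (hμ : 0 < μ) (hr : 0 ≤ r) (hC : 0 ≤ C)
    (hR : 0 ≤ R) (hRδ : R ^ 2 ≤ C * δ ^ 2) (hδ : μ * δ ^ 2 ≤ r * R) : R ≤ C / μ * r := by
  rw [div_mul_eq_mul_div, le_div_iff₀ hμ]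
  rcases hR.eq_or_lt with rfl | hR
  · simp only [zero_mul]; positivity
  · refine le_of_mul_le_mul_left ?_ hR
    nlinarith

theorem EuclideanSpace.norm_sq_le_card_mul_sq {ι : Type*} [Fintype ι] {x : EuclideanSpace ℝ ι}
    {c : ℝ} (hx : ∀ i, |x i| ≤ c) : ‖x‖ ^ 2 ≤ Fintype.card ι * c ^ 2 := by
  rw [EuclideanSpace.norm_sq_eq]
  calc ∑ i, ‖x i‖ ^ 2 ≤ ∑ _i : ι, c ^ 2 :=
        sum_le_sum fun i _ => by
          rw [Real.norm_eq_abs]; exact pow_le_pow_left₀ (abs_nonneg _) (hx i) 2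
    _ = Fintype.card ι * c ^ 2 := by simp

section Componentwise

variable {E ι : Type*} [NormedAddCommGroup E] [InnerProductSpace ℝ E] [Fintype ι]
  {g : E → EuclideanSpace ℝ ι}

theorem norm_sub_sq_le_of_forall_convexOn_component [FiniteDimensional ℝ E]
    (hg : ∀ l, ConvexOn ℝ univ fun x => g x l) {Lg : ℝ}
    (hsub : ∀ l x s, IsSubgradientAt (fun w => g w l) s x → ‖s‖ ≤ Lg) (x x' : E) :
    ‖g x - g x'‖ ^ 2 ≤ Fintype.card ι * Lg ^ 2 * ‖x - x'‖ ^ 2 := by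
  rw [mul_assoc, ← mul_pow]
  exact EuclideanSpace.norm_sq_le_card_mul_sq fun l =>
    (hg l).abs_sub_le_of_norm_subgradient_le (hsub l) x x'

theorem convexOn_inner_of_forall_nonneg (hg : ∀ l, ConvexOn ℝ univ fun x => g x l)
    {y : EuclideanSpace ℝ ι} (hy : ∀ l, 0 ≤ y l) : ConvexOn ℝ univ fun x => ⟪y, g x⟫ := by
  refine ⟨convex_univ, fun x _ x' _ a c ha hc hac => ?_⟩
  simp only [PiLp.inner_apply, RCLike.inner_apply, conj_trivial, smul_eq_mul, mul_sum]
  rw [← sum_add_distrib]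
  refine sum_le_sum fun l _ => ?_
  have := mul_le_mul_of_nonneg_right ((hg l).2 (mem_univ x) (mem_univ x') ha hc hac) (hy l)
  simp only [smul_eq_mul] at this
  linarith

end Componentwise

theorem concaveOn_apply_minimizer {V X : Type*} [AddCommGroup V] [Module ℝ V] {D : Set V}
    (hD : Convex ℝ D) {L : V → X → ℝ} (hL : ∀ x, ConcaveOn ℝ D fun ζ => L ζ x) {xm : V → X}
    (hxm : ∀ ζ ∈ D, ∀ w, L ζ (xm ζ) ≤ L ζ w) : ConcaveOn ℝ D fun ζ => L ζ (xm ζ) := by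
  refine ⟨hD, fun ζ hζ ζ' hζ' a c ha hc hac => ?_⟩
  calc a • L ζ (xm ζ) + c • L ζ' (xm ζ')
      ≤ a • L ζ (xm (a • ζ + c • ζ')) + c • L ζ' (xm (a • ζ + c • ζ')) := by
        gcongr
        exacts [hxm ζ hζ _, hxm ζ' hζ' _]
    _ ≤ L (a • ζ + c • ζ') (xm (a • ζ + c • ζ')) := (hL _).2 hζ hζ' ha hc hac

theorem convex_setOf_forall_snd_nonneg {V ι : Type*} [AddCommGroup V] [Module ℝ V] :
    Convex ℝ {ζ : V × EuclideanSpace ℝ ι | ∀ l, 0 ≤ ζ.2 l} :=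
  fun ζ hζ ζ' hζ' a c ha hc _ l => by
    simpa using add_nonneg (mul_nonneg ha (hζ l)) (mul_nonneg hc (hζ' l))

section Lagrangian

variable {d p q : ℕ} {f : EuclideanSpace ℝ (Fin d) → ℝ}
  {g : EuclideanSpace ℝ (Fin d) → EuclideanSpace ℝ (Fin q)}
  {A : EuclideanSpace ℝ (Fin d) →L[ℝ] EuclideanSpace ℝ (Fin p)}
  {b v : EuclideanSpace ℝ (Fin p)} {z : EuclideanSpace ℝ (Fin q)}

theorem lagrangian_eq_add_inner (ζ ζ' : EuclideanSpace ℝ (Fin p) × EuclideanSpace ℝ (Fin q))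
    (x : EuclideanSpace ℝ (Fin d)) :
    lagrangian f g A b v z ζ' x = lagrangian f g A b v z ζ x
      + ⟪A x - b - v, ζ'.1 - ζ.1⟫ + ⟪g x - z, ζ'.2 - ζ.2⟫ := by
  simp only [lagrangian, inner_sub_right (A x - b - v), inner_sub_right (g x - z),
    real_inner_comm (A x - b - v), real_inner_comm (g x - z)]
  ring

theorem concaveOn_lagrangian_left (x : EuclideanSpace ℝ (Fin d)) :
    ConcaveOn ℝ univ fun ζ => lagrangian f g A b v z ζ x := by
  refine ⟨convex_univ, fun ζ _ ζ' _ a c _ _ hac => le_of_eq ?_⟩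
  simp only [lagrangian, Prod.fst_add, Prod.snd_add, Prod.smul_fst, Prod.smul_snd,
    inner_add_left, real_inner_smul_left, smul_eq_mul]
  linear_combination f x * hac

theorem strongConvexOn_lagrangian {μ : ℝ} (hf : StrongConvexOn univ μ f)
    (hg : ∀ l, ConvexOn ℝ univ fun x => g x l)
    {ζ : EuclideanSpace ℝ (Fin p) × EuclideanSpace ℝ (Fin q)} (hζ : ∀ l, 0 ≤ ζ.2 l) :
    StrongConvexOn univ μ (lagrangian f g A b v z ζ) := by
  have haff : ConvexOn ℝ univ fun x => ⟪ζ.1, A x - b - v⟫ :=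
    ((((innerSL ℝ ζ.1).comp A).toLinearMap.convexOn convex_univ).add_const
      (-⟪ζ.1, b + v⟫)).congr fun x _ => by
      change ⟪ζ.1, A x⟫ + -⟪ζ.1, b + v⟫ = _
      rw [inner_add_right, inner_sub_right, inner_sub_right]; ring
  have hcon : ConvexOn ℝ univ fun x => ⟪ζ.2, g x - z⟫ :=
    ((convexOn_inner_of_forall_nonneg hg hζ).add_const (-⟪ζ.2, z⟫)).congr fun x _ => by
      rw [inner_sub_right, sub_eq_add_neg]; rfl
  exact (hf.add_convexOn haff).add_convexOn hcon

theorem mul_sq_norm_sub_le_inner_of_lagrangian_minimizers {μ : ℝ}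
    {ζ ζ' : EuclideanSpace ℝ (Fin p) × EuclideanSpace ℝ (Fin q)}
    (hζ : StrongConvexOn univ μ (lagrangian f g A b v z ζ))
    (hζ' : StrongConvexOn univ μ (lagrangian f g A b v z ζ')) {x x' : EuclideanSpace ℝ (Fin d)}
    (hx : ∀ w, lagrangian f g A b v z ζ x ≤ lagrangian f g A b v z ζ w)
    (hx' : ∀ w, lagrangian f g A b v z ζ' x' ≤ lagrangian f g A b v z ζ' w) :
    μ * ‖x - x'‖ ^ 2 ≤ ⟪ζ.1 - ζ'.1, A x' - A x⟫ + ⟪ζ.2 - ζ'.2, g x' - g x⟫ := by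
  have h := hζ.add_sq_norm_sub_le hx x'
  have h' := hζ'.add_sq_norm_sub_le hx' x
  rw [lagrangian_eq_add_inner ζ' ζ x'] at h
  rw [lagrangian_eq_add_inner ζ ζ' x] at h'
  rw [norm_sub_rev] at h
  have hApair :
      ⟪A x' - b - v, ζ.1 - ζ'.1⟫ + ⟪A x - b - v, ζ'.1 - ζ.1⟫ = ⟪ζ.1 - ζ'.1, A x' - A x⟫ := by
    rw [← neg_sub ζ.1 ζ'.1, inner_neg_right, real_inner_comm (A x' - A x)]
    simp only [inner_sub_left]; ring
  have hgpair : ⟪g x' - z, ζ.2 - ζ'.2⟫ + ⟪g x - z, ζ'.2 - ζ.2⟫ = ⟪ζ.2 - ζ'.2, g x' - g x⟫ := by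
    rw [← neg_sub ζ.2 ζ'.2, inner_neg_right, real_inner_comm (g x' - g x)]
    simp only [inner_sub_left]; ring
  linarith

theorem residual_dist_le_of_lagrangian_minimizers {μ : ℝ} (hμ : 0 < μ)
    {ζ ζ' : EuclideanSpace ℝ (Fin p) × EuclideanSpace ℝ (Fin q)}
    (hζ : StrongConvexOn univ μ (lagrangian f g A b v z ζ))
    (hζ' : StrongConvexOn univ μ (lagrangian f g A b v z ζ')) {x x' : EuclideanSpace ℝ (Fin d)}
    (hx : ∀ w, lagrangian f g A b v z ζ x ≤ lagrangian f g A b v z ζ w)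
    (hx' : ∀ w, lagrangian f g A b v z ζ' x' ≤ lagrangian f g A b v z ζ' w) {C : ℝ}
    (hC : 0 ≤ C) (hg : ‖g x - g x'‖ ^ 2 ≤ C * ‖x - x'‖ ^ 2) :
    √(‖A x - A x'‖ ^ 2 + ‖g x - g x'‖ ^ 2)
      ≤ (‖A‖ ^ 2 + C) / μ * √(‖ζ.1 - ζ'.1‖ ^ 2 + ‖ζ.2 - ζ'.2‖ ^ 2) := by
  have hA : ‖A x - A x'‖ ≤ ‖A‖ * ‖x - x'‖ := by rw [← map_sub]; exact A.le_opNorm _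
  refine le_div_mul_of_sq_le_of_mul_sq_le (δ := ‖x - x'‖) hμ (Real.sqrt_nonneg _) (by positivity)
    (Real.sqrt_nonneg _) ?_ ?_
  · rw [Real.sq_sqrt (by positivity)]
    nlinarith [pow_le_pow_left₀ (norm_nonneg _) hA 2]
  · calc μ * ‖x - x'‖ ^ 2 ≤ ⟪ζ.1 - ζ'.1, A x' - A x⟫ + ⟪ζ.2 - ζ'.2, g x' - g x⟫ :=
          mul_sq_norm_sub_le_inner_of_lagrangian_minimizers hζ hζ' hx hx'
      _ ≤ ‖ζ.1 - ζ'.1‖ * ‖A x - A x'‖ + ‖ζ.2 - ζ'.2‖ * ‖g x - g x'‖ := by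
          rw [norm_sub_rev (A x), norm_sub_rev (g x)]
          gcongr <;> exact real_inner_le_norm _ _
      _ ≤ _ := mul_add_mul_le_sqrt_mul_sqrt _ _ _ _

end Lagrangian

/-- For `μ`-strongly convex `f` and componentwise convex `g` with bounded
subgradients: for each `ζ = (u, y)` with `y ≥ 0` the Lagrangian has a unique minimizer `x(ζ)`;
the dual function `φ(ζ) = min_x L(x, ζ)` is concave on `ℝ^p × ℝ^q_{≥0}`; the map
`ζ ↦ (A x(ζ) − b − v, g(x(ζ)) − z)` is a supergradient selection for `φ`; and it is
`L`-Lipschitz on `ℝ^p × ℝ^q_{≥0}` for some `L > 0`. -/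
theorem dual_function_properties
    (d p q : ℕ) (μ Lg : ℝ) (hμ : 0 < μ)
    (f : EuclideanSpace ℝ (Fin d) → ℝ)
    (hf : ConvexOn ℝ Set.univ (fun x => f x - μ / 2 * ‖x‖ ^ 2))
    (g : EuclideanSpace ℝ (Fin d) → EuclideanSpace ℝ (Fin q))
    (hg : ∀ l, ConvexOn ℝ Set.univ (fun x => g x l))
    (hsub : ∀ (l : Fin q) (x s : EuclideanSpace ℝ (Fin d)),
      IsSubgradientAt (fun w => g w l) s x → ‖s‖ ≤ Lg)
    (A : EuclideanSpace ℝ (Fin d) →L[ℝ] EuclideanSpace ℝ (Fin p))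
    (b v : EuclideanSpace ℝ (Fin p)) (z : EuclideanSpace ℝ (Fin q))
    (D : Set (EuclideanSpace ℝ (Fin p) × EuclideanSpace ℝ (Fin q)))
    (hD : D = {ζ | ∀ l, 0 ≤ ζ.2 l}) :
    ∃ xm : (EuclideanSpace ℝ (Fin p) × EuclideanSpace ℝ (Fin q)) → EuclideanSpace ℝ (Fin d),
      -- `xm ζ` is a minimizer of the Lagrangian, and it is unique
      (∀ ζ ∈ D, ∀ w, lagrangian f g A b v z ζ (xm ζ) ≤ lagrangian f g A b v z ζ w) ∧
      (∀ ζ ∈ D, ∀ w, (∀ w', lagrangian f g A b v z ζ w ≤ lagrangian f g A b v z ζ w') →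
        w = xm ζ) ∧
      -- the dual function is concave on `ℝ^p × ℝ^q_{≥0}`
      ConcaveOn ℝ D (fun ζ => lagrangian f g A b v z ζ (xm ζ)) ∧
      -- supergradient property of `ζ ↦ (A x(ζ) − b − v, g(x(ζ)) − z)`
      (∀ ζ ∈ D, ∀ ζ' ∈ D,
        lagrangian f g A b v z ζ' (xm ζ') ≤ lagrangian f g A b v z ζ (xm ζ)
          + ⟪A (xm ζ) - b - v, ζ'.1 - ζ.1⟫ + ⟪g (xm ζ) - z, ζ'.2 - ζ.2⟫) ∧
      -- Lipschitz continuity of the supergradient map on the dual domain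
      (∃ L : ℝ, 0 < L ∧ ∀ ζ ∈ D, ∀ ζ' ∈ D,
        Real.sqrt (‖A (xm ζ) - A (xm ζ')‖ ^ 2 + ‖g (xm ζ) - g (xm ζ')‖ ^ 2)
          ≤ L * Real.sqrt (‖ζ.1 - ζ'.1‖ ^ 2 + ‖ζ.2 - ζ'.2‖ ^ 2)) := by
  have hstrong : ∀ ζ ∈ D, StrongConvexOn univ μ (lagrangian f g A b v z ζ) := fun ζ hζ =>
    strongConvexOn_lagrangian (strongConvexOn_iff_convex.2 hf) hg (hD.subset hζ)
  have hDconv : Convex ℝ D := hD ▸ convex_setOf_forall_snd_nonneg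
  choose! xm hxm using fun ζ hζ => (hstrong ζ hζ).exists_forall_le hμ
  refine ⟨xm, hxm, fun ζ hζ w hw => ?_, concaveOn_apply_minimizer hDconv
    (fun x => (concaveOn_lagrangian_left x).subset (subset_univ D) hDconv) hxm,
    fun ζ _ ζ' hζ' => ?_, ?_⟩
  · exact ((hstrong ζ hζ).strictConvexOn hμ).eq_of_isMinOn (isMinOn_univ_iff.2 hw)
      (isMinOn_univ_iff.2 (hxm ζ hζ)) trivial trivial
  · exact (hxm ζ' hζ' (xm ζ)).trans (lagrangian_eq_add_inner ζ ζ' (xm ζ)).le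
  · set C := q * Lg ^ 2
    refine ⟨(‖A‖ ^ 2 + C) / μ + 1, by positivity, fun ζ hζ ζ' hζ' => ?_⟩
    have hgLip := norm_sub_sq_le_of_forall_convexOn_component hg hsub (xm ζ) (xm ζ')
    rw [Fintype.card_fin] at hgLip
    calc _ ≤ (‖A‖ ^ 2 + C) / μ * √(‖ζ.1 - ζ'.1‖ ^ 2 + ‖ζ.2 - ζ'.2‖ ^ 2) :=
          residual_dist_le_of_lagrangian_minimizers hμ (hstrong ζ hζ) (hstrong ζ' hζ')
            (hxm ζ hζ) (hxm ζ' hζ') (by positivity) hgLip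
      _ ≤ _ := by gcongr; linarith
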